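/- arXiv:2507.12088 — 2 statements merged into one kernel-verified Lean document; each statement's English description precedes it below -/
import Mathlib

section
/- Let γ : [0,L(t)]×[0,T) → ℝ² be a smooth solution of the dorsal-closure flow. Then at the Neumann boundary point s = 0 the curvature satisfies k_s(0,t) = -k(0,t)/L(t), and at the Dirichlet boundary point s = L(t) the curvature satisfies k(L(t),t) = ν₁(L(t),t) ν₂²(L(t),t) / L(t). -/
noncomputable section

open Set MeasureTheory

/-- Partial derivative in the first (space) variable. -/
def pderivU {E : Type*} [NormedAddCommGroup E] [NormedSpace ℝ E]
    (f : ℝ → ℝ → E) : ℝ → ℝ → E :=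
  fun u t => deriv (fun u' => f u' t) u

/-- Partial derivative in the second (time) variable. -/
def pderivT {E : Type*} [NormedAddCommGroup E] [NormedSpace ℝ E]
    (f : ℝ → ℝ → E) : ℝ → ℝ → E :=
  fun u t => deriv (fun t' => f u t') t

/-- The speed `|γ_u|` of a family of plane curves. -/
def speedOf (γ : ℝ → ℝ → ℝ × ℝ) : ℝ → ℝ → ℝ :=
  fun u t => Real.sqrt ((pderivU γ u t).1 ^ 2 + (pderivU γ u t).2 ^ 2)

/-- The unit tangent vector `τ = |γ_u|⁻¹ γ_u`. -/
def tangentOf (γ : ℝ → ℝ → ℝ × ℝ) : ℝ → ℝ → ℝ × ℝ :=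
  fun u t => (speedOf γ u t)⁻¹ • pderivU γ u t

/-- The (inward) unit normal vector `ν = |γ_u|⁻¹ (y_u, -x_u)`
(for a clockwise parametrisation). -/
def normalOf (γ : ℝ → ℝ → ℝ × ℝ) : ℝ → ℝ → ℝ × ℝ :=
  fun u t => (speedOf γ u t)⁻¹ • ((pderivU γ u t).2, -(pderivU γ u t).1)

/-- The scalar curvature `k = |γ_u|⁻² ⟨γ_uu, ν⟩`. -/
def curvOf (γ : ℝ → ℝ → ℝ × ℝ) : ℝ → ℝ → ℝ :=
  fun u t => (speedOf γ u t ^ 2)⁻¹ *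
    ((pderivU (pderivU γ) u t).1 * (normalOf γ u t).1 +
     (pderivU (pderivU γ) u t).2 * (normalOf γ u t).2)

/-- The length `L(t)` of the curve `γ(·,t)` (the curves are parametrised over `[0,1]`). -/
def lenOf (γ : ℝ → ℝ → ℝ × ℝ) : ℝ → ℝ :=
  fun t => ∫ u in (0:ℝ)..1, speedOf γ u t

/-- The scalar zipping factor `z = -ν₁ ν₂² / L(t)`. -/
def zipOf (γ : ℝ → ℝ → ℝ × ℝ) : ℝ → ℝ → ℝ :=
  fun u t => -((normalOf γ u t).1 * (normalOf γ u t).2 ^ 2) / lenOf γ t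

/-- The arclength derivative `∂_s = |γ_u|⁻¹ ∂_u` along the family `γ`. -/
def dsOf {E : Type*} [NormedAddCommGroup E] [NormedSpace ℝ E]
    (γ : ℝ → ℝ → ℝ × ℝ) (f : ℝ → ℝ → E) : ℝ → ℝ → E :=
  fun u t => (speedOf γ u t)⁻¹ • pderivU f u t

/-- `γ` is a (smooth, regular) solution of the dorsal-closure flow
`∂_t γ = (k + z) ν` with Neumann boundary condition `τ(0,t) = e₁` and
Dirichlet boundary condition `γ(1,t) = (ρ₀,0)`. -/
def IsDCFlow (ρ₀ : ℝ) (γ : ℝ → ℝ → ℝ × ℝ) : Prop :=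
  ContDiff ℝ (⊤ : ℕ∞) (Function.uncurry γ) ∧
  (∀ u t, pderivU γ u t ≠ 0) ∧
  (∀ u t, pderivT γ u t = (curvOf γ u t + zipOf γ u t) • normalOf γ u t) ∧
  (∀ t, tangentOf γ 0 t = (1, 0)) ∧
  (∀ t, γ 1 t = (ρ₀, 0))

private lemma one_le_inf' : (1 : WithTop ℕ∞) ≤ ((⊤ : ℕ∞) : WithTop ℕ∞) := by
  exact_mod_cast ENat.natCast_le_of_coe_top_le_withTop le_rfl 1

private lemma two_le_inf' : (2 : WithTop ℕ∞) ≤ ((⊤ : ℕ∞) : WithTop ℕ∞) := by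
  exact_mod_cast ENat.natCast_le_of_coe_top_le_withTop le_rfl 2

private lemma hasDerivAt_fst' {f : ℝ → ℝ × ℝ} {f' : ℝ × ℝ} {x : ℝ} (h : HasDerivAt f f' x) :
    HasDerivAt (fun y => (f y).1) f'.1 x := by
  exact (hasFDerivAt_fst (p := f x)).comp_hasDerivAt x h

private lemma hasDerivAt_snd' {f : ℝ → ℝ × ℝ} {f' : ℝ × ℝ} {x : ℝ} (h : HasDerivAt f f' x) :
    HasDerivAt (fun y => (f y).2) f'.2 x := by
  exact (hasFDerivAt_snd (p := f x)).comp_hasDerivAt x h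

/-- Lemma 3.4: boundary relations for the curvature along the
dorsal-closure flow.  At the Neumann boundary (`u = 0`, corresponding to `s = 0`)
one has `k_s(0,t) = -k(0,t)/L(t)`, and at the Dirichlet boundary (`u = 1`,
corresponding to `s = L(t)`) one has `k(L(t),t) = ν₁ ν₂² / L(t)`. -/
theorem dc_boundary_relations (ρ₀ T : ℝ) (hρ : 0 < ρ₀) (hT : 0 < T)
    (γ : ℝ → ℝ → ℝ × ℝ) (hγ : IsDCFlow ρ₀ γ) :
    ∀ t ∈ Set.Ico (0:ℝ) T,
      dsOf γ (curvOf γ) 0 t = -(curvOf γ 0 t) / lenOf γ t ∧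
      curvOf γ 1 t = (normalOf γ 1 t).1 * (normalOf γ 1 t).2 ^ 2 / lenOf γ t := by
  obtain ⟨hF, hreg, hflow, hneu, hdir⟩ := hγ
  set F : ℝ × ℝ → ℝ × ℝ := Function.uncurry γ with hFdef
  have hFd : Differentiable ℝ F := hF.differentiable (by simp)
  have hF' : ContDiff ℝ (⊤ : ℕ∞) (fderiv ℝ F) := (contDiff_infty_iff_fderiv.mp hF).2
  have hPs : ∀ u t : ℝ, HasDerivAt (fun u' => γ u' t) (fderiv ℝ F (u, t) (1, 0)) u := by
    intro u t
    exact (hFd (u, t)).hasFDerivAt.comp_hasDerivAt u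
      ((hasDerivAt_id u).prodMk (hasDerivAt_const u t))
  have hP : ∀ u t : ℝ, pderivU γ u t = fderiv ℝ F (u, t) (1, 0) := fun u t => (hPs u t).deriv
  have hQ : ∀ u t : ℝ, pderivT γ u t = fderiv ℝ F (u, t) (0, 1) := by
    intro u t
    exact ((hFd (u, t)).hasFDerivAt.comp_hasDerivAt t
      ((hasDerivAt_const t u).prodMk (hasDerivAt_id t))).deriv
  -- positivity of the speed
  have hspos : ∀ u t : ℝ, 0 < speedOf γ u t := by
    intro u t
    have h := hreg u t
    have hor : (pderivU γ u t).1 ≠ 0 ∨ (pderivU γ u t).2 ≠ 0 := by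
      by_contra hcon
      push_neg at hcon
      exact h (Prod.ext hcon.1 hcon.2)
    have h1 : 0 < (pderivU γ u t).1 ^ 2 + (pderivU γ u t).2 ^ 2 := by
      rcases hor with h1 | h1
      · have h2 : 0 < (pderivU γ u t).1 ^ 2 :=
          lt_of_le_of_ne (sq_nonneg _) (Ne.symm (pow_ne_zero 2 h1))
        nlinarith [sq_nonneg (pderivU γ u t).2]
      · have h2 : 0 < (pderivU γ u t).2 ^ 2 :=
          lt_of_le_of_ne (sq_nonneg _) (Ne.symm (pow_ne_zero 2 h1))
        nlinarith [sq_nonneg (pderivU γ u t).1]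
    exact Real.sqrt_pos.mpr h1
  -- the Neumann condition forces the second component of `γ_u` to vanish at `u = 0`
  have hneu2 : ∀ t' : ℝ, (pderivU γ 0 t').2 = 0 := by
    intro t'
    have h := congrArg Prod.snd (hneu t')
    simp only [tangentOf, Prod.smul_snd, smul_eq_mul] at h
    rcases mul_eq_zero.mp h with h | h
    · exact absurd (inv_eq_zero.mp h) (hspos 0 t').ne'
    · exact h
  -- positivity of the length
  have hLpos : ∀ t' : ℝ, 0 < lenOf γ t' := by
    intro t'
    have hPc : Continuous fun u => pderivU γ u t' := by
      have h1 : ContDiff ℝ (⊤ : ℕ∞) fun x : ℝ × ℝ => fderiv ℝ F x ((1:ℝ), (0:ℝ)) :=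
        hF'.clm_apply contDiff_const
      have h2 : Continuous fun u : ℝ => fderiv ℝ F (u, t') ((1:ℝ), (0:ℝ)) :=
        (h1.comp (contDiff_id.prodMk contDiff_const)).continuous
      have h3 : (fun u => pderivU γ u t') = fun u : ℝ => fderiv ℝ F (u, t') ((1:ℝ), (0:ℝ)) :=
        funext fun u => hP u t'
      rw [h3]; exact h2
    have hsc : Continuous fun u => speedOf γ u t' := by
      simp only [speedOf]
      exact Real.continuous_sqrt.comp ((hPc.fst.pow 2).add (hPc.snd.pow 2))
    exact intervalIntegral.intervalIntegral_pos_of_pos (hsc.intervalIntegrable 0 1)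
      (fun u => hspos u t') one_pos
  rintro t -
  ------------------------------------------------------------------
  -- fixed-time machinery
  set p : ℝ → ℝ × ℝ := fun u => fderiv ℝ F (u, t) ((1:ℝ), (0:ℝ)) with hpdef
  have hpC : ContDiff ℝ (⊤ : ℕ∞) p := by
    rw [hpdef]
    exact (hF'.clm_apply contDiff_const).comp (contDiff_id.prodMk contDiff_const)
  have hpeq : ∀ u, pderivU γ u t = p u := by
    intro u; rw [hP u t, hpdef]
  set q : ℝ → ℝ × ℝ := deriv p with hqdef
  have hq : ∀ u, HasDerivAt p (q u) u := by
    intro u; rw [hqdef]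
    exact (hpC.differentiable (by simp) u).hasDerivAt
  have hqd : Differentiable ℝ q := by
    rw [hqdef]
    exact (contDiff_infty_iff_deriv.mp hpC).2.differentiable (by simp)
  have hqq : ∀ u, pderivU (pderivU γ) u t = q u := by
    intro u
    have h : (fun u' => pderivU γ u' t) = p := funext hpeq
    show deriv (fun u' => pderivU γ u' t) u = q u
    rw [h, hqdef]
  set V : ℝ → ℝ := fun u => Real.sqrt ((p u).1 ^ 2 + (p u).2 ^ 2) with hVdef
  have hVeq : ∀ u, speedOf γ u t = V u := by
    intro u; simp only [speedOf, hpeq, hVdef]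
  have hVpos : ∀ u, 0 < V u := by
    intro u; rw [← hVeq u]; exact hspos u t
  have hc : 0 < V 0 := hVpos 0
  have hp0 : p 0 = (V 0, 0) := by
    have h : (V 0)⁻¹ • p 0 = ((1:ℝ), (0:ℝ)) := by
      have h0 := hneu t
      simp only [tangentOf] at h0
      rw [hVeq 0, hpeq 0] at h0
      exact h0
    have h2 := congrArg (fun x : ℝ × ℝ => (V 0) • x) h
    simp only [smul_smul, mul_inv_cancel₀ hc.ne', one_smul, Prod.smul_mk, smul_eq_mul,
      mul_one, mul_zero] at h2
    exact h2
  have hp01 : (p 0).1 = V 0 := by rw [hp0]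
  have hp02 : (p 0).2 = 0 := by rw [hp0]
  -- derivative of the speed at 0
  have hVd : HasDerivAt V (q 0).1 0 := by
    have hinner := ((hasDerivAt_fst' (hq 0)).pow 2).add ((hasDerivAt_snd' (hq 0)).pow 2)
    have hs0 : (p 0).1 ^ 2 + (p 0).2 ^ 2 ≠ 0 := by
      rw [hp01, hp02]
      have hne := hc.ne'
      positivity
    have h := (Real.hasDerivAt_sqrt hs0).comp 0 hinner
    rw [hVdef]
    convert h using 1
    · rfl
    · rfl
    · rfl
    rw [hp01, hp02]
    rw [show Real.sqrt (V 0 ^ 2 + 0 ^ 2) = V 0 by simpa using Real.sqrt_sq hc.le]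
    field_simp
    simp only [Nat.cast_ofNat, Nat.reduceSub, pow_one, zero_mul, add_zero]
    ring
  -- the unit normal
  set N1 : ℝ → ℝ := fun u => (p u).2 / V u with hN1def
  set N2 : ℝ → ℝ := fun u => -(p u).1 / V u with hN2def
  have hNeq : ∀ u, normalOf γ u t = (N1 u, N2 u) := by
    intro u
    simp only [normalOf, hpeq, hVeq, hN1def, hN2def, Prod.smul_mk, smul_eq_mul,
      div_eq_inv_mul]
  have hN10 : N1 0 = 0 := by rw [hN1def]; simp [hp02]
  have hN20 : N2 0 = -1 := by rw [hN2def]; simp [hp01, hc.ne']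
  have hN1d : HasDerivAt N1 ((q 0).2 / V 0) 0 := by
    have h := (hasDerivAt_snd' (hq 0)).div hVd (hVpos 0).ne'
    rw [hN1def]
    convert h using 1
    · rfl
    · rfl
    · rfl
    rw [hp02]
    field_simp
    ring
  have hN2d : HasDerivAt N2 0 0 := by
    have h := ((hasDerivAt_fst' (hq 0)).neg).div hVd (hVpos 0).ne'
    rw [hN2def]
    convert h using 1
    · rfl
    · rfl
    · rfl
    simp only [Pi.neg_apply]
    rw [hp01]
    ring
  -- the curvature
  set K : ℝ → ℝ := fun u => curvOf γ u t with hKdef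
  have hKfun : K = fun u => ((V u) ^ 2)⁻¹ * ((q u).1 * N1 u + (q u).2 * N2 u) := by
    funext u
    rw [hKdef]
    simp only [curvOf, hVeq, hqq, hNeq]
  have hK0 : K 0 = -((q 0).2 / V 0 ^ 2) := by
    rw [hKfun]
    simp only [hN10, hN20]
    ring
  have hKdiff : DifferentiableAt ℝ K 0 := by
    rw [hKfun]
    exact ((hVd.differentiableAt.pow 2).inv (pow_ne_zero 2 hc.ne')).mul
      (((hqd 0).fst.mul hN1d.differentiableAt).add ((hqd 0).snd.mul hN2d.differentiableAt))
  -- the zipping factor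
  set L : ℝ := lenOf γ t with hLdef
  have hL : 0 < L := by rw [hLdef]; exact hLpos t
  set Z : ℝ → ℝ := fun u => zipOf γ u t with hZdef
  have hZfun : Z = fun u => -(N1 u * N2 u ^ 2) / L := by
    funext u
    rw [hZdef]
    simp only [zipOf, hNeq, ← hLdef]
  have hZd : HasDerivAt Z (-((q 0).2 / V 0) / L) 0 := by
    rw [hZfun]
    have h := ((hN1d.mul (hN2d.pow 2)).neg).div_const L
    convert h using 1
    · rfl
    · rfl
    · rfl
    simp only [Pi.pow_apply]
    rw [hN10, hN20]
    ring
  ------------------------------------------------------------------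
  -- Clairaut / commuting partial derivatives
  have hsymm : ∀ v w : ℝ × ℝ, fderiv ℝ (fderiv ℝ F) (0, t) v w
      = fderiv ℝ (fderiv ℝ F) (0, t) w v :=
    hF.contDiffAt.isSymmSndFDerivAt (by simpa using two_le_inf')
  have hfd2 : HasFDerivAt (fderiv ℝ F) (fderiv ℝ (fderiv ℝ F) (0, t)) (0, t) :=
    (hF'.differentiable (by simp) (0, t)).hasFDerivAt
  have hA : HasDerivAt (fun t' => fderiv ℝ F (0, t') ((1:ℝ), (0:ℝ)))
      (fderiv ℝ (fderiv ℝ F) (0, t) (0, 1) (1, 0)) t := by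
    have h1 : HasDerivAt (fun t' => fderiv ℝ F (0, t'))
        (fderiv ℝ (fderiv ℝ F) (0, t) (0, 1)) t :=
      hfd2.comp_hasDerivAt t ((hasDerivAt_const t (0:ℝ)).prodMk (hasDerivAt_id t))
    simpa using h1.clm_apply (hasDerivAt_const t ((1:ℝ), (0:ℝ)))
  have hB : HasDerivAt (fun u => fderiv ℝ F (u, t) ((0:ℝ), (1:ℝ)))
      (fderiv ℝ (fderiv ℝ F) (0, t) (1, 0) (0, 1)) 0 := by
    have h1 : HasDerivAt (fun u => fderiv ℝ F (u, t))
        (fderiv ℝ (fderiv ℝ F) (0, t) (1, 0)) 0 :=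
      hfd2.comp_hasDerivAt 0 ((hasDerivAt_id 0).prodMk (hasDerivAt_const 0 t))
    simpa using h1.clm_apply (hasDerivAt_const 0 ((0:ℝ), (1:ℝ)))
  have hA2 : (fderiv ℝ (fderiv ℝ F) (0, t) (0, 1) ((1:ℝ), (0:ℝ))).2 = 0 := by
    have h2 := hasDerivAt_snd' hA
    have h4 : HasDerivAt (fun _ : ℝ => (0:ℝ))
        (fderiv ℝ (fderiv ℝ F) (0, t) (0, 1) ((1:ℝ), (0:ℝ))).2 t :=
      h2.congr_of_eventuallyEq (Filter.Eventually.of_forall fun t' => by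
        show (0:ℝ) = ((fderiv ℝ F (0, t')) ((1:ℝ), (0:ℝ))).2
        rw [← hP 0 t']
        exact (hneu2 t').symm)
    exact h4.unique (hasDerivAt_const t 0)
  ------------------------------------------------------------------
  -- combining: the flow equation at time `t`
  have hφdiff : DifferentiableAt ℝ (fun u => K u + Z u) 0 := hKdiff.add hZd.differentiableAt
  have hφ : HasDerivAt (fun u => K u + Z u) (deriv (fun u => K u + Z u) 0) 0 :=
    hφdiff.hasDerivAt
  have hBP : HasDerivAt (fun u => (K u + Z u) • ((N1 u, N2 u) : ℝ × ℝ))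
      ((K 0 + Z 0) • ((((q 0).2 / V 0 : ℝ), (0:ℝ)) : ℝ × ℝ)
        + deriv (fun u => K u + Z u) 0 • ((N1 0, N2 0) : ℝ × ℝ)) 0 :=
    hφ.smul (hN1d.prodMk hN2d)
  have hBfun : (fun u => fderiv ℝ F (u, t) ((0:ℝ), (1:ℝ)))
      = fun u => (K u + Z u) • ((N1 u, N2 u) : ℝ × ℝ) := by
    funext u
    rw [← hQ u t, hflow u t, hNeq u]
  rw [hBfun] at hB
  have huniq := hBP.unique hB
  have hd0 : deriv (fun u => K u + Z u) 0 = 0 := by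
    have hsnd := congrArg Prod.snd huniq
    rw [hsymm (1, 0) (0, 1)] at hsnd
    rw [hA2] at hsnd
    simp only [Prod.snd_add, Prod.smul_snd, smul_eq_mul, hN20, mul_zero, zero_add] at hsnd
    linarith
  have hKd : HasDerivAt K (deriv (fun u => K u + Z u) 0 - -((q 0).2 / V 0) / L) 0 := by
    have h := hφ.sub hZd
    simpa [Pi.sub_def] using h
  constructor
  ------------------------------------------------------------------
  -- Neumann boundary relation
  · have hderivK : deriv K 0 = (q 0).2 / V 0 / L := by
      rw [hKd.deriv, hd0]
      ring
    have hpdK : pderivU (curvOf γ) 0 t = deriv K 0 := by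
      rw [hKdef]
      rfl
    have hcurv0 : curvOf γ 0 t = K 0 := by rw [hKdef]
    show (speedOf γ 0 t)⁻¹ • pderivU (curvOf γ) 0 t = -(curvOf γ 0 t) / L
    rw [hpdK, hderivK, hVeq 0, hcurv0, hK0, smul_eq_mul, neg_neg]
    field_simp [hc.ne', hL.ne']
  ------------------------------------------------------------------
  -- Dirichlet boundary relation
  · have hQ1 : pderivT γ 1 t = 0 := by
      have h : (fun t' => γ 1 t') = fun _ => ((ρ₀, 0) : ℝ × ℝ) := funext hdir
      show deriv (fun t' => γ 1 t') t = 0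
      rw [h]
      exact deriv_const t _
    have h := hflow 1 t
    rw [hQ1] at h
    have hν : normalOf γ 1 t ≠ 0 := by
      simp only [normalOf]
      intro hcon
      rcases smul_eq_zero.mp hcon with h' | h'
      · exact inv_ne_zero (hspos 1 t).ne' h'
      · apply hreg 1 t
        have h1 := congrArg Prod.fst h'
        have h2 := congrArg Prod.snd h'
        simp only [Prod.fst_zero, Prod.snd_zero, neg_eq_zero] at h1 h2
        exact Prod.ext h2 h1
    have hk : curvOf γ 1 t + zipOf γ 1 t = 0 := by
      rcases smul_eq_zero.mp h.symm with h' | h'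
      · exact h'
      · exact absurd h' hν
    have hz : zipOf γ 1 t = -((normalOf γ 1 t).1 * (normalOf γ 1 t).2 ^ 2) / L := by
      simp only [zipOf, ← hLdef]
    rw [hz] at hk
    have hrw : -((normalOf γ 1 t).1 * (normalOf γ 1 t).2 ^ 2) / L
        = -((normalOf γ 1 t).1 * (normalOf γ 1 t).2 ^ 2 / L) := by ring
    rw [hrw] at hk
    linarith
end
end

section
/- (Discrete maximum principle.) Let X, Y, w : {0,…,n}×{0,…,m} → ℝ be mesh functions such that for all interior spatial indices k ∈ {1,…,n−1} and all time indices j < m: (D_t w)^j_k = X^j_k (D²w)^j_k + Y^j_k (D₀w)^j_k, and the coefficient conditions X^j_k + (Y^j_k/2)δu ≥ 0, 1 − 2X^j_k δt/(δu)² ≥ 0, and X^j_k − (Y^j_k/2)δu ≥ 0 hold. Then for every j < m, max_{0≤k≤n} |w^{j+1}_k| ≤ max{ |w^{j+1}_0|, max_{0≤k≤n} |w^j_k|, |w^{j+1}_n| }. -/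
noncomputable section

open Finset

/-- The forward difference operator `(D₊v)_k = (v_{k+1} - v_k)/δu`. -/
def dplus (δu : ℝ) (v : ℕ → ℝ) (k : ℕ) : ℝ := (v (k + 1) - v k) / δu

/-- The centred difference operator `(D₀v)_k = (v_{k+1} - v_{k-1})/(2δu)`
(used only at interior indices `k ≥ 1`). -/
def d0 (δu : ℝ) (v : ℕ → ℝ) (k : ℕ) : ℝ := (v (k + 1) - v (k - 1)) / (2 * δu)

/-- The second difference operator
`(D²v)_k = (v_{k+1} - 2v_k + v_{k-1})/δu²`. -/
def d2 (δu : ℝ) (v : ℕ → ℝ) (k : ℕ) : ℝ :=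
  (v (k + 1) - 2 * v k + v (k - 1)) / δu ^ 2

/-- The forward time difference operator `(D_t w)^j_k = (w^{j+1}_k - w^j_k)/δt`
for a mesh function `w` (time index first). -/
def dtime (δt : ℝ) (w : ℕ → ℕ → ℝ) (j k : ℕ) : ℝ := (w (j + 1) k - w j k) / δt

/-- The discrete length functional
`L[v] = δu Σ_{i<n} √(1 + ((D₊v)_i)²)`. -/
def dlen (δu : ℝ) (n : ℕ) (v : ℕ → ℝ) : ℝ :=
  δu * ∑ i ∈ Finset.range n, Real.sqrt (1 + dplus δu v i ^ 2)

/-- The discrete sup-norm (maximum of absolute values) over a finite set of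
spatial indices. -/
def supOn (s : Finset ℕ) (v : ℕ → ℝ) : ℝ := s.fold max 0 (fun k => |v k|)

/-!
The scheme is explicit: solving the difference equation for `w^{j+1}_k` writes it as
`a w^j_{k+1} + b w^j_k + c w^j_{k-1}` with `a + b + c = 1`, and the three coefficient
conditions say exactly that `a, b, c ≥ 0`. So every interior value at time `j + 1` is a
convex combination of values at time `j`, and is bounded in absolute value by their maximum;
only the two boundary values escape this bound.
-/

theorem supOn_le_iff {s : Finset ℕ} {v : ℕ → ℝ} {M : ℝ} :
    supOn s v ≤ M ↔ 0 ≤ M ∧ ∀ k ∈ s, |v k| ≤ M :=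
  Finset.fold_max_le M

theorem abs_le_supOn {s : Finset ℕ} (v : ℕ → ℝ) {k : ℕ} (hk : k ∈ s) :
    |v k| ≤ supOn s v :=
  (Finset.le_fold_max |v k|).2 (Or.inr ⟨k, hk, le_rfl⟩)

theorem abs_convex_combination_le {a b c p q r S : ℝ} (ha : 0 ≤ a) (hb : 0 ≤ b) (hc : 0 ≤ c)
    (habc : a + b + c = 1) (hp : |p| ≤ S) (hq : |q| ≤ S) (hr : |r| ≤ S) :
    |a * p + b * q + c * r| ≤ S :=
  calc |a * p + b * q + c * r| ≤ |a * p| + |b * q| + |c * r| := abs_add_three _ _ _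
    _ = a * |p| + b * |q| + c * |r| := by
      rw [abs_mul, abs_mul, abs_mul, abs_of_nonneg ha, abs_of_nonneg hb, abs_of_nonneg hc]
    _ ≤ a * S + b * S + c * S := by gcongr
    _ = S := by rw [← add_mul, ← add_mul, habc, one_mul]

section ExplicitScheme

variable {δu δt x y : ℝ} {w : ℕ → ℕ → ℝ} {j k : ℕ}

theorem eq_of_dtime_eq (hδu : δu ≠ 0) (hδt : δt ≠ 0)
    (h : dtime δt w j k = x * d2 δu (w j) k + y * d0 δu (w j) k) :
    w (j + 1) k = δt / δu ^ 2 * (x + y / 2 * δu) * w j (k + 1)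
      + (1 - 2 * x * δt / δu ^ 2) * w j k + δt / δu ^ 2 * (x - y / 2 * δu) * w j (k - 1) := by
  rw [dtime, d2, d0, div_eq_iff hδt] at h
  rw [eq_add_of_sub_eq h]
  field_simp
  ring

theorem abs_le_of_dtime_eq (hδu : δu ≠ 0) (hδt : 0 < δt) {S : ℝ}
    (h : dtime δt w j k = x * d2 δu (w j) k + y * d0 δu (w j) k)
    (hplus : 0 ≤ x + y / 2 * δu) (hmid : 0 ≤ 1 - 2 * x * δt / δu ^ 2)
    (hminus : 0 ≤ x - y / 2 * δu) (hnext : |w j (k + 1)| ≤ S) (hcur : |w j k| ≤ S)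
    (hprev : |w j (k - 1)| ≤ S) :
    |w (j + 1) k| ≤ S := by
  have hratio : 0 ≤ δt / δu ^ 2 := by positivity
  rw [eq_of_dtime_eq hδu hδt.ne' h]
  refine abs_convex_combination_le (mul_nonneg hratio hplus) hmid (mul_nonneg hratio hminus)
    ?_ hnext hcur hprev
  field_simp
  ring

end ExplicitScheme

/-- Lemma 6.3, discrete maximum principle: if a mesh function
`w` satisfies `(D_t w)^j_k = X^j_k (D²w)^j_k + Y^j_k (D₀w)^j_k` at all interior
spatial indices and the coefficient positivity conditions hold, then
`max_k |w^{j+1}_k| ≤ max{|w^{j+1}_0|, max_k |w^j_k|, |w^{j+1}_n|}`. -/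
theorem discrete_maximum_principle (δu δt : ℝ) (hδu : 0 < δu) (hδt : 0 < δt)
    (n m : ℕ) (X Y w : ℕ → ℕ → ℝ)
    (heq : ∀ j, j < m → ∀ k, 0 < k → k < n →
      dtime δt w j k = X j k * d2 δu (w j) k + Y j k * d0 δu (w j) k)
    (hcoef : ∀ j, j < m → ∀ k, 0 < k → k < n →
      0 ≤ X j k + Y j k / 2 * δu ∧
      0 ≤ 1 - 2 * X j k * δt / δu ^ 2 ∧
      0 ≤ X j k - Y j k / 2 * δu) :
    ∀ j, j < m →
      supOn (Finset.range (n + 1)) (w (j + 1)) ≤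
        max |w (j + 1) 0|
          (max (supOn (Finset.range (n + 1)) (w j)) |w (j + 1) n|) := by
  intro j hj
  set S := supOn (Finset.range (n + 1)) (w j)
  refine supOn_le_iff.2 ⟨(abs_nonneg _).trans (le_max_left _ _), fun k hk => ?_⟩
  rw [Finset.mem_range] at hk
  obtain rfl | hk0 := Nat.eq_zero_or_pos k
  · exact le_max_left _ _
  obtain rfl | hkn := (Nat.lt_succ_iff.mp hk).eq_or_lt
  · exact (le_max_right _ _).trans (le_max_right _ _)
  have hS (i : ℕ) (hi : i ≤ n) : |w j i| ≤ S := abs_le_supOn _ (Finset.mem_range.2 (by omega))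
  obtain ⟨hplus, hmid, hminus⟩ := hcoef j hj k hk0 hkn
  have hint : |w (j + 1) k| ≤ S :=
    abs_le_of_dtime_eq hδu.ne' hδt (heq j hj k hk0 hkn) hplus hmid hminus
      (hS _ (by omega)) (hS _ (by omega)) (hS _ (by omega))
  exact hint.trans ((le_max_left _ _).trans (le_max_right _ _))
end
end
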